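/- Let (w_i; i ∈ ℕ) be an infinite sequence of reals with 1/3 < w_i < 1 for all i. Then the Cantor-type set [0(w⃗)1] := ⋂_{n∈ℕ} [0(W⃗_n)1], where W⃗_n = (w_0,…,w_{n−1}), satisfies the 4-values condition. -/

import Mathlib

/-- A triple `(a,b,c)` is metric if each entry is at most the sum of the other two. -/
def IsMetricTriple (a b c : ℝ) : Prop :=
  a ≤ b + c ∧ b ≤ a + c ∧ c ≤ a + b

/-- The 4-values condition. -/
def FourValues (S : Set ℝ) : Prop :=
  ∀ a ∈ S, ∀ b ∈ S, ∀ c ∈ S, ∀ d ∈ S,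
    max b (max c d) ≤ a → a ≤ b + c + d →
      ∀ x ∈ S, IsMetricTriple a b x → IsMetricTriple c d x →
        ∃ y ∈ S, IsMetricTriple a d y ∧ IsMetricTriple c b y

/-- Left endpoint of the removed middle interval: `γ(a,w,b) = ((1+w)a + (1−w)b)/2`. -/
noncomputable def cantorGamma (a w b : ℝ) : ℝ := ((1 + w) * a + (1 - w) * b) / 2

/-- Right endpoint of the removed middle interval: `δ(a,w,b) = ((1−w)a + (1+w)b)/2`. -/
noncomputable def cantorDelta (a w b : ℝ) : ℝ := ((1 - w) * a + (1 + w) * b) / 2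

/-- `[a(w⃗)b]`: from `[a,b]`, successively remove middle open intervals of relative
lengths given by the finite sequence `w⃗`. -/
noncomputable def cantorApprox : List ℝ → ℝ → ℝ → Set ℝ
  | [], a, b => Set.Icc a b
  | w :: ws, a, b =>
      cantorApprox ws a (cantorGamma a w b) ∪ cantorApprox ws (cantorDelta a w b) b

/-! ### Auxiliary lemmas -/

lemma metric_swap {a b c : ℝ} (h : IsMetricTriple a b c) : IsMetricTriple b a c := by
  obtain ⟨h1, h2, h3⟩ := h
  exact ⟨h2, h1, by linarith⟩

/-- The amalgamation property (4-values condition without the two redundant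
scalar hypotheses). -/
def QP (S : Set ℝ) : Prop :=
  ∀ a ∈ S, ∀ b ∈ S, ∀ c ∈ S, ∀ d ∈ S,
    max b (max c d) ≤ a →
      ∀ x ∈ S, IsMetricTriple a b x → IsMetricTriple c d x →
        ∃ y ∈ S, IsMetricTriple a d y ∧ IsMetricTriple c b y

/-- Symmetric form of `QP`: no maximality assumption needed. -/
lemma QP.sym {S : Set ℝ} (h : QP S) :
    ∀ p ∈ S, ∀ q ∈ S, ∀ r ∈ S, ∀ s ∈ S, ∀ x ∈ S,
      IsMetricTriple p q x → IsMetricTriple r s x →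
      ∃ y ∈ S, IsMetricTriple p s y ∧ IsMetricTriple r q y := by
  intro p hp q hq r hr s hs x hx h1 h2
  rcases le_total (max p q) (max r s) with hm | hm
  · rcases le_total r s with h' | h'
    · -- s is the maximum
      have hs' : max p q ≤ s := by rwa [max_eq_right h'] at hm
      have hps : p ≤ s := (le_max_left p q).trans hs'
      have hqs : q ≤ s := (le_max_right p q).trans hs'
      obtain ⟨y, hy, hA, hB⟩ := h s hs r hr q hq p hp
        (by simp only [max_le_iff]; exact ⟨h', hqs, hps⟩) x hx
        (metric_swap h2) (metric_swap h1)
      exact ⟨y, hy, metric_swap hA, metric_swap hB⟩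
    · -- r is the maximum
      have hr' : max p q ≤ r := by rwa [max_eq_left h'] at hm
      have hpr : p ≤ r := (le_max_left p q).trans hr'
      have hqr : q ≤ r := (le_max_right p q).trans hr'
      obtain ⟨y, hy, hA, hB⟩ := h r hr s hs p hp q hq
        (by simp only [max_le_iff]; exact ⟨h', hpr, hqr⟩) x hx h2 h1
      exact ⟨y, hy, hB, hA⟩
  · rcases le_total p q with h' | h'
    · -- q is the maximum
      have hq' : max r s ≤ q := by rwa [max_eq_right h'] at hm
      have hrq : r ≤ q := (le_max_left r s).trans hq'
      have hsq : s ≤ q := (le_max_right r s).trans hq'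
      obtain ⟨y, hy, hA, hB⟩ := h q hq p hp s hs r hr
        (by simp only [max_le_iff]; exact ⟨h', hsq, hrq⟩) x hx
        (metric_swap h1) (metric_swap h2)
      exact ⟨y, hy, metric_swap hB, metric_swap hA⟩
    · -- p is the maximum
      have hp' : max r s ≤ p := by rwa [max_eq_left h'] at hm
      have hrp : r ≤ p := (le_max_left r s).trans hp'
      have hsp : s ≤ p := (le_max_right r s).trans hp'
      exact h p hp q hq r hr s hs
        (by simp only [max_le_iff]; exact ⟨h', hrp, hsp⟩) x hx h1 h2

lemma gamma_lower {a b v : ℝ} (hab : a ≤ b) (hv : v ≤ 1) : a ≤ cantorGamma a v b := by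
  have h1 : 0 ≤ (1 - v) * (b - a) := mul_nonneg (by linarith) (by linarith)
  unfold cantorGamma; nlinarith [h1]

lemma gamma_upper {a b v : ℝ} (hab : a ≤ b) (hv : -1 ≤ v) : cantorGamma a v b ≤ b := by
  have h1 : 0 ≤ (1 + v) * (b - a) := mul_nonneg (by linarith) (by linarith)
  unfold cantorGamma; nlinarith [h1]

lemma delta_lower {a b v : ℝ} (hab : a ≤ b) (hv : -1 ≤ v) : a ≤ cantorDelta a v b := by
  have h1 : 0 ≤ (1 + v) * (b - a) := mul_nonneg (by linarith) (by linarith)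
  unfold cantorDelta; nlinarith [h1]

lemma delta_upper {a b v : ℝ} (hab : a ≤ b) (hv : v ≤ 1) : cantorDelta a v b ≤ b := by
  have h1 : 0 ≤ (1 - v) * (b - a) := mul_nonneg (by linarith) (by linarith)
  unfold cantorDelta; nlinarith [h1]

lemma cantorApprox_subset_Icc :
    ∀ (ws : List ℝ), (∀ v ∈ ws, 0 ≤ v ∧ v ≤ 1) →
      ∀ a b : ℝ, a ≤ b → cantorApprox ws a b ⊆ Set.Icc a b := by
  intro ws
  induction ws with
  | nil =>
    intro _ a b _
    simp only [cantorApprox]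
    exact subset_rfl
  | cons v ws ih =>
    intro h a b hab
    have hv := h v (List.mem_cons_self : v ∈ v :: ws)
    have hws : ∀ u ∈ ws, 0 ≤ u ∧ u ≤ 1 := fun u hu => h u (List.mem_cons_of_mem _ hu)
    have h1 : a ≤ cantorGamma a v b := gamma_lower hab hv.2
    have h2 : cantorGamma a v b ≤ b := gamma_upper hab (by linarith [hv.1])
    have h3 : a ≤ cantorDelta a v b := delta_lower hab (by linarith [hv.1])
    have h4 : cantorDelta a v b ≤ b := delta_upper hab hv.2
    simp only [cantorApprox]
    apply Set.union_subset
    · exact (ih hws a _ h1).trans (Set.Icc_subset_Icc le_rfl h2)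
    · exact (ih hws _ b h4).trans (Set.Icc_subset_Icc h3 le_rfl)

lemma right_mem_cantorApprox :
    ∀ (ws : List ℝ), (∀ v ∈ ws, 0 ≤ v ∧ v ≤ 1) →
      ∀ a b : ℝ, a ≤ b → b ∈ cantorApprox ws a b := by
  intro ws
  induction ws with
  | nil =>
    intro _ a b hab
    simp only [cantorApprox]
    exact Set.mem_Icc.mpr ⟨hab, le_rfl⟩
  | cons v ws ih =>
    intro h a b hab
    have hv := h v (List.mem_cons_self : v ∈ v :: ws)
    have hws : ∀ u ∈ ws, 0 ≤ u ∧ u ≤ 1 := fun u hu => h u (List.mem_cons_of_mem _ hu)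
    have h4 : cantorDelta a v b ≤ b := delta_upper hab hv.2
    simp only [cantorApprox]
    exact Or.inr (ih hws _ b h4)

lemma cantorApprox_translate :
    ∀ (ws : List ℝ) (k a b : ℝ),
      cantorApprox ws (k + a) (k + b) = (fun z => k + z) '' cantorApprox ws a b := by
  intro ws
  induction ws with
  | nil =>
    intro k a b
    simp only [cantorApprox]
    ext s
    simp only [Set.mem_Icc, Set.mem_image]
    constructor
    · rintro ⟨hs1, hs2⟩
      exact ⟨s - k, ⟨by linarith, by linarith⟩, by ring⟩
    · rintro ⟨z, ⟨hz1, hz2⟩, rfl⟩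
      constructor <;> simp <;> linarith
  | cons v ws ih =>
    intro k a b
    have hg : cantorGamma (k + a) v (k + b) = k + cantorGamma a v b := by
      unfold cantorGamma; ring
    have hd : cantorDelta (k + a) v (k + b) = k + cantorDelta a v b := by
      unfold cantorDelta; ring
    simp only [cantorApprox, hg, hd, ih, Set.image_union]

lemma cantorApprox_isClosed : ∀ (ws : List ℝ) (a b : ℝ), IsClosed (cantorApprox ws a b) := by
  intro ws
  induction ws with
  | nil => intro a b; exact isClosed_Icc
  | cons v ws ih => intro a b; exact (ih _ _).union (ih _ _)

lemma cantorApprox_append :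
    ∀ (ws : List ℝ) (v : ℝ), 0 ≤ v → v ≤ 1 → (∀ u ∈ ws, 0 ≤ u ∧ u ≤ 1) →
      ∀ a b : ℝ, a ≤ b → cantorApprox (ws ++ [v]) a b ⊆ cantorApprox ws a b := by
  intro ws v hv0 hv1
  induction ws with
  | nil =>
    intro _ a b hab
    simp only [List.nil_append, cantorApprox]
    apply Set.union_subset
    · exact Set.Icc_subset_Icc le_rfl (gamma_upper hab (by linarith))
    · exact Set.Icc_subset_Icc (delta_lower hab (by linarith)) le_rfl
  | cons u ws ih =>
    intro h a b hab
    have hu := h u (List.mem_cons_self : u ∈ u :: ws)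
    have hws : ∀ z ∈ ws, 0 ≤ z ∧ z ≤ 1 := fun z hz => h z (List.mem_cons_of_mem _ hz)
    have h1 : a ≤ cantorGamma a u b := gamma_lower hab hu.2
    have h4 : cantorDelta a u b ≤ b := delta_upper hab hu.2
    simp only [List.cons_append, cantorApprox]
    exact Set.union_subset_union (ih hws a _ h1) (ih hws _ b h4)

set_option maxHeartbeats 2000000 in
/-- The key inductive lemma: each finite approximation satisfies `QP`. -/
lemma qp_cantor :
    ∀ (ws : List ℝ), (∀ v ∈ ws, 1/3 < v ∧ v < 1) →
      ∀ u : ℝ, 0 ≤ u → QP (cantorApprox ws 0 u) := by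
  intro ws
  induction ws with
  | nil =>
    intro _ u hu
    intro a ha b hb c hc d hd hmax x hx h1 h2
    simp only [cantorApprox] at ha hb hc hd hx ⊢
    obtain ⟨ha0, hau⟩ := Set.mem_Icc.mp ha
    obtain ⟨hb0, hbu⟩ := Set.mem_Icc.mp hb
    obtain ⟨hc0, hcu⟩ := Set.mem_Icc.mp hc
    obtain ⟨hd0, hdu⟩ := Set.mem_Icc.mp hd
    have hba : b ≤ a := le_trans (le_max_left _ _) hmax
    have hca : c ≤ a := le_trans ((le_max_left c d).trans (le_max_right b _)) hmax
    have hda : d ≤ a := le_trans ((le_max_right c d).trans (le_max_right b _)) hmax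
    obtain ⟨h11, h12, h13⟩ := h1
    obtain ⟨h21, h22, h23⟩ := h2
    refine ⟨max (max (a - d) (d - a)) (max (b - c) (c - b)), ?_, ⟨?_, ?_, ?_⟩, ⟨?_, ?_, ?_⟩⟩
    · rw [Set.mem_Icc]
      constructor
      · rcases le_total a d with h | h
        · exact le_trans (by linarith : (0:ℝ) ≤ d - a)
            (le_trans (le_max_right _ _) (le_max_left _ _))
        · exact le_trans (by linarith : (0:ℝ) ≤ a - d)
            (le_trans (le_max_left _ _) (le_max_left _ _))
      · exact max_le (max_le (by linarith) (by linarith)) (max_le (by linarith) (by linarith))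
    · have := le_trans (le_max_left (a-d) (d-a)) (le_max_left _ (max (b-c) (c-b)))
      linarith
    · have := le_trans (le_max_right (a-d) (d-a)) (le_max_left _ (max (b-c) (c-b)))
      linarith
    · exact max_le (max_le (by linarith) (by linarith)) (max_le (by linarith) (by linarith))
    · have := le_trans (le_max_right (b-c) (c-b)) (le_max_right (max (a-d) (d-a)) _)
      linarith
    · have := le_trans (le_max_left (b-c) (c-b)) (le_max_right (max (a-d) (d-a)) _)
      linarith
    · exact max_le (max_le (by linarith) (by linarith)) (max_le (by linarith) (by linarith))
  | cons v ws ih =>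
    intro hws u hu
    have hv := hws v (List.mem_cons_self : v ∈ v :: ws)
    have hws' : ∀ z ∈ ws, 1/3 < z ∧ z < 1 := fun z hz => hws z (List.mem_cons_of_mem _ hz)
    have hwk : ∀ z ∈ ws, 0 ≤ z ∧ z ≤ 1 :=
      fun z hz => ⟨by linarith [(hws' z hz).1], le_of_lt (hws' z hz).2⟩
    have hwkc : ∀ z ∈ (v :: ws), 0 ≤ z ∧ z ≤ 1 := by
      intro z hz
      rcases List.mem_cons.mp hz with rfl | hz
      · exact ⟨by linarith [hv.1], le_of_lt hv.2⟩
      · exact hwk z hz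
    rcases eq_or_lt_of_le hu with hu0 | hu0
    · -- degenerate case u = 0
      intro a ha b hb c hc d hd hmax x hx h1 h2
      subst hu0
      have hsub := cantorApprox_subset_Icc (v :: ws) hwkc 0 0 le_rfl
      have haz : a = 0 := le_antisymm (Set.mem_Icc.mp (hsub ha)).2 (Set.mem_Icc.mp (hsub ha)).1
      have hbz : b = 0 := le_antisymm (Set.mem_Icc.mp (hsub hb)).2 (Set.mem_Icc.mp (hsub hb)).1
      have hcz : c = 0 := le_antisymm (Set.mem_Icc.mp (hsub hc)).2 (Set.mem_Icc.mp (hsub hc)).1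
      have hdz : d = 0 := le_antisymm (Set.mem_Icc.mp (hsub hd)).2 (Set.mem_Icc.mp (hsub hd)).1
      subst haz; subst hbz; subst hcz; subst hdz
      exact ⟨0, ha, ⟨by norm_num, by norm_num, by norm_num⟩,
        ⟨by norm_num, by norm_num, by norm_num⟩⟩
    · -- main case : 0 < u
      obtain ⟨m, hmdef⟩ : ∃ m, m = cantorGamma 0 v u := ⟨_, rfl⟩
      obtain ⟨t, htdef⟩ : ∃ t, t = cantorDelta 0 v u := ⟨_, rfl⟩
      have hmeq : m = (1 - v) * u / 2 := by rw [hmdef]; unfold cantorGamma; ring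
      have hteq : t = (1 + v) * u / 2 := by rw [htdef]; unfold cantorDelta; ring
      have hm0 : 0 ≤ m := by rw [hmeq]; nlinarith [hv.2, hu0]
      have hmt : 2 * m < t := by rw [hmeq, hteq]; nlinarith [hv.1, hu0]
      have htu : t + m = u := by rw [hmeq, hteq]; ring
      have hQB := ih hws' m hm0
      have hBIcc : cantorApprox ws 0 m ⊆ Set.Icc 0 m := cantorApprox_subset_Icc ws hwk 0 m hm0
      have htrans : cantorApprox ws t u = (fun z => t + z) '' cantorApprox ws 0 m := by
        have h := cantorApprox_translate ws t 0 m
        rw [add_zero, htu] at h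
        exact h
      have hCiff : ∀ s : ℝ, s ∈ cantorApprox (v :: ws) 0 u ↔
          (s ∈ cantorApprox ws 0 m ∨ ∃ s' ∈ cantorApprox ws 0 m, s = t + s') := by
        intro s
        rw [show cantorApprox (v :: ws) 0 u =
            cantorApprox ws 0 (cantorGamma 0 v u) ∪ cantorApprox ws (cantorDelta 0 v u) u
            from rfl, ← hmdef, ← htdef, Set.mem_union, htrans]
        simp only [Set.mem_image]
        constructor
        · rintro (h | ⟨z, hz, rfl⟩)
          · exact Or.inl h
          · exact Or.inr ⟨z, hz, rfl⟩
        · rintro (h | ⟨z, hz, rfl⟩)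
          · exact Or.inl h
          · exact Or.inr ⟨z, hz, rfl⟩
      have hmemB : ∀ s, s ∈ cantorApprox ws 0 m → s ∈ cantorApprox (v :: ws) 0 u :=
        fun s hs => (hCiff s).mpr (Or.inl hs)
      have hmemH : ∀ s, s ∈ cantorApprox ws 0 m → t + s ∈ cantorApprox (v :: ws) 0 u :=
        fun s hs => (hCiff _).mpr (Or.inr ⟨s, hs, rfl⟩)
      have hmB : m ∈ cantorApprox ws 0 m := right_mem_cantorApprox ws hwk 0 m hm0
      intro a ha b hb c hc d hd hmax x hx h1 h2
      have hba : b ≤ a := le_trans (le_max_left _ _) hmax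
      have hca : c ≤ a := le_trans ((le_max_left c d).trans (le_max_right b _)) hmax
      have hda : d ≤ a := le_trans ((le_max_right c d).trans (le_max_right b _)) hmax
      obtain ⟨h11, h12, h13⟩ := h1
      obtain ⟨h21, h22, h23⟩ := h2
      rcases (hCiff a).mp ha with haB | ⟨A, hA, rfl⟩
      · -- a is in the low part; then everything is low
        obtain ⟨ha0, ham⟩ := Set.mem_Icc.mp (hBIcc haB)
        have hbB : b ∈ cantorApprox ws 0 m := by
          rcases (hCiff b).mp hb with h | ⟨B', hB', rfl⟩
          · exact h
          · exfalso; obtain ⟨h0, _⟩ := Set.mem_Icc.mp (hBIcc hB'); linarith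
        have hcB : c ∈ cantorApprox ws 0 m := by
          rcases (hCiff c).mp hc with h | ⟨C', hC', rfl⟩
          · exact h
          · exfalso; obtain ⟨h0, _⟩ := Set.mem_Icc.mp (hBIcc hC'); linarith
        have hdB : d ∈ cantorApprox ws 0 m := by
          rcases (hCiff d).mp hd with h | ⟨D', hD', rfl⟩
          · exact h
          · exfalso; obtain ⟨h0, _⟩ := Set.mem_Icc.mp (hBIcc hD'); linarith
        obtain ⟨hb0, hbm⟩ := Set.mem_Icc.mp (hBIcc hbB)
        have hxB : x ∈ cantorApprox ws 0 m := by
          rcases (hCiff x).mp hx with h | ⟨X, hX, rfl⟩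
          · exact h
          · exfalso; obtain ⟨h0, _⟩ := Set.mem_Icc.mp (hBIcc hX); linarith
        obtain ⟨y, hy, hy1, hy2⟩ := hQB a haB b hbB c hcB d hdB hmax x hxB
          ⟨h11, h12, h13⟩ ⟨h21, h22, h23⟩
        exact ⟨y, hmemB y hy, hy1, hy2⟩
      · -- a = t + A is high
        obtain ⟨hA0, hAm⟩ := Set.mem_Icc.mp (hBIcc hA)
        rcases (hCiff b).mp hb with hbB | ⟨B', hB', rfl⟩
        · obtain ⟨hb0, hbm⟩ := Set.mem_Icc.mp (hBIcc hbB)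
          rcases (hCiff c).mp hc with hcB | ⟨C', hC', rfl⟩
          · obtain ⟨hc0, hcm⟩ := Set.mem_Icc.mp (hBIcc hcB)
            rcases (hCiff d).mp hd with hdB | ⟨D', hD', rfl⟩
            · -- case (i): a high, b,c,d low : impossible
              obtain ⟨hd0, hdm⟩ := Set.mem_Icc.mp (hBIcc hdB)
              exfalso
              rcases (hCiff x).mp hx with hxB | ⟨X, hX, rfl⟩
              · obtain ⟨hx0, hxm⟩ := Set.mem_Icc.mp (hBIcc hxB); linarith
              · obtain ⟨hX0, hXm⟩ := Set.mem_Icc.mp (hBIcc hX); linarith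
            · -- case (ii-d): a, d high; b, c low
              obtain ⟨hD0, hDm⟩ := Set.mem_Icc.mp (hBIcc hD')
              have hxH : ∃ X ∈ cantorApprox ws 0 m, x = t + X := by
                rcases (hCiff x).mp hx with hxB | ⟨X, hX, rfl⟩
                · exfalso; obtain ⟨hx0, hxm⟩ := Set.mem_Icc.mp (hBIcc hxB); linarith
                · exact ⟨X, hX, rfl⟩
              obtain ⟨X, hX, rfl⟩ := hxH
              obtain ⟨hX0, hXm⟩ := Set.mem_Icc.mp (hBIcc hX)
              by_cases kmax : A - D' ≤ b ∨ A - D' ≤ c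
              · rcases le_total b c with hbc | hbc
                · refine ⟨c, hmemB _ hcB, ⟨?_, by linarith, by linarith⟩,
                    ⟨by linarith, by linarith, by linarith⟩⟩
                  rcases kmax with k | k <;> linarith
                · refine ⟨b, hmemB _ hbB, ⟨?_, by linarith, by linarith⟩,
                    ⟨by linarith, by linarith, by linarith⟩⟩
                  rcases kmax with k | k <;> linarith
              · push_neg at kmax
                obtain ⟨kb, kc⟩ := kmax
                by_cases kleg : c ≤ D' + X
                · obtain ⟨y, hy, hm1, hm2⟩ := QP.sym hQB A hA b hbB c hcB D' hD' X hX
                    ⟨by linarith, by linarith, by linarith⟩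
                    ⟨kleg, by linarith, by linarith⟩
                  obtain ⟨p1, p2, p3⟩ := hm1
                  obtain ⟨hy0, hym⟩ := Set.mem_Icc.mp (hBIcc hy)
                  exact ⟨y, hmemB _ hy, ⟨by linarith, by linarith, by linarith⟩, hm2⟩
                · by_cases kD : D' ≤ 2 * X
                  · obtain ⟨y, hy, hm1, hm2⟩ := QP.sym hQB A hA b hbB X hX D' hD' X hX
                      ⟨by linarith, by linarith, by linarith⟩
                      ⟨by linarith, by linarith, by linarith⟩
                    obtain ⟨p1, p2, p3⟩ := hm1
                    obtain ⟨q1, q2, q3⟩ := hm2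
                    obtain ⟨hy0, hym⟩ := Set.mem_Icc.mp (hBIcc hy)
                    exact ⟨y, hmemB _ hy, ⟨by linarith, by linarith, by linarith⟩,
                      ⟨by linarith, by linarith, by linarith⟩⟩
                  · exfalso; linarith
          · -- c = t + C' is high
            obtain ⟨hC0, hCm⟩ := Set.mem_Icc.mp (hBIcc hC')
            rcases (hCiff d).mp hd with hdB | ⟨D', hD', rfl⟩
            · -- case (ii-c): a, c high; b, d low
              obtain ⟨hd0, hdm⟩ := Set.mem_Icc.mp (hBIcc hdB)
              have hxH : ∃ X ∈ cantorApprox ws 0 m, x = t + X := by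
                rcases (hCiff x).mp hx with hxB | ⟨X, hX, rfl⟩
                · exfalso; obtain ⟨hx0, hxm⟩ := Set.mem_Icc.mp (hBIcc hxB); linarith
                · exact ⟨X, hX, rfl⟩
              obtain ⟨X, hX, rfl⟩ := hxH
              obtain ⟨hX0, hXm⟩ := Set.mem_Icc.mp (hBIcc hX)
              by_cases k1 : b ≤ A + X
              · by_cases k2 : d ≤ C' + X
                · obtain ⟨y, hy, hm1, hm2⟩ := QP.sym hQB A hA b hbB C' hC' d hdB X hX
                    ⟨by linarith, k1, by linarith⟩ ⟨by linarith, k2, by linarith⟩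
                  obtain ⟨p1, p2, p3⟩ := hm1
                  obtain ⟨q1, q2, q3⟩ := hm2
                  obtain ⟨hy0, hym⟩ := Set.mem_Icc.mp (hBIcc hy)
                  exact ⟨t + y, hmemH _ hy, ⟨by linarith, by linarith, by linarith⟩,
                    ⟨by linarith, by linarith, by linarith⟩⟩
                · by_cases k3 : A ≤ C' + d
                  · exact ⟨t + C', hmemH _ hC', ⟨by linarith, by linarith, by linarith⟩,
                      ⟨by linarith, by linarith, by linarith⟩⟩
                  · exact ⟨t + b, hmemH _ hbB, ⟨by linarith, by linarith, by linarith⟩,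
                      ⟨by linarith, by linarith, by linarith⟩⟩
              · exact ⟨t + A, hmemH _ hA, ⟨by linarith, by linarith, by linarith⟩,
                  ⟨by linarith, by linarith, by linarith⟩⟩
            · -- case (iii-cd): a, c, d high; b low
              obtain ⟨hD0, hDm⟩ := Set.mem_Icc.mp (hBIcc hD')
              exact ⟨t + C', hmemH _ hC', ⟨by linarith, by linarith, by linarith⟩,
                ⟨by linarith, by linarith, by linarith⟩⟩
        · -- b = t + B' is high
          obtain ⟨hB0, hBm⟩ := Set.mem_Icc.mp (hBIcc hB')
          rcases (hCiff c).mp hc with hcB | ⟨C', hC', rfl⟩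
          · obtain ⟨hc0, hcm⟩ := Set.mem_Icc.mp (hBIcc hcB)
            rcases (hCiff d).mp hd with hdB | ⟨D', hD', rfl⟩
            · -- case (ii-b): a, b high; c, d low
              obtain ⟨hd0, hdm⟩ := Set.mem_Icc.mp (hBIcc hdB)
              have hxB : x ∈ cantorApprox ws 0 m := by
                rcases (hCiff x).mp hx with hxB | ⟨X, hX, rfl⟩
                · exact hxB
                · exfalso; obtain ⟨hX0, hXm⟩ := Set.mem_Icc.mp (hBIcc hX); linarith
              obtain ⟨hx0, hxm⟩ := Set.mem_Icc.mp (hBIcc hxB)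
              by_cases k1 : x ≤ A + B'
              · obtain ⟨y, hy, hm1, hm2⟩ := QP.sym hQB A hA B' hB' c hcB d hdB x hxB
                  ⟨by linarith, by linarith, k1⟩ ⟨h21, h22, h23⟩
                obtain ⟨p1, p2, p3⟩ := hm1
                obtain ⟨q1, q2, q3⟩ := hm2
                obtain ⟨hy0, hym⟩ := Set.mem_Icc.mp (hBIcc hy)
                exact ⟨t + y, hmemH _ hy, ⟨by linarith, by linarith, by linarith⟩,
                  ⟨by linarith, by linarith, by linarith⟩⟩
              · by_cases k2 : A ≤ B' + c
                · exact ⟨t + A, hmemH _ hA, ⟨by linarith, by linarith, by linarith⟩,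
                    ⟨by linarith, by linarith, by linarith⟩⟩
                · by_cases k3 : B' ≤ 2 * c
                  · exact ⟨t + c, hmemH _ hcB, ⟨by linarith, by linarith, by linarith⟩,
                      ⟨by linarith, by linarith, by linarith⟩⟩
                  · by_cases k4 : A - d ≤ B'
                    · exact ⟨t + B', hmemH _ hB', ⟨by linarith, by linarith, by linarith⟩,
                        ⟨by linarith, by linarith, by linarith⟩⟩
                    · exfalso; linarith
            · -- case (iii-bd): a, b, d high; c low
              obtain ⟨hD0, hDm⟩ := Set.mem_Icc.mp (hBIcc hD')
              exact ⟨t + B', hmemH _ hB', ⟨by linarith, by linarith, by linarith⟩,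
                ⟨by linarith, by linarith, by linarith⟩⟩
          · obtain ⟨hC0, hCm⟩ := Set.mem_Icc.mp (hBIcc hC')
            rcases (hCiff d).mp hd with hdB | ⟨D', hD', rfl⟩
            · -- case (iii-bc): a, b, c high; d low
              obtain ⟨hd0, hdm⟩ := Set.mem_Icc.mp (hBIcc hdB)
              exact ⟨t + A, hmemH _ hA, ⟨by linarith, by linarith, by linarith⟩,
                ⟨by linarith, by linarith, by linarith⟩⟩
            · -- case (iv): a, b, c, d all high
              obtain ⟨hD0, hDm⟩ := Set.mem_Icc.mp (hBIcc hD')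
              exact ⟨m, hmemB _ hmB, ⟨by linarith, by linarith, by linarith⟩,
                ⟨by linarith, by linarith, by linarith⟩⟩

set_option maxHeartbeats 1000000 in
/-- For every infinite sequence `(wᵢ)` with `1/3 < wᵢ < 1` for all `i`, the
Cantor-type set `[0(w⃗)1] = ⋂ₙ [0(W⃗ₙ)1]`, where `W⃗ₙ = (w₀,…,w_{n−1})`, satisfies
the 4-values condition. -/
theorem cantor_fourValues (w : ℕ → ℝ) (hw : ∀ i, 1 / 3 < w i ∧ w i < 1) :
    FourValues (⋂ n : ℕ, cantorApprox ((List.range n).map w) 0 1) := by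
  intro a ha b hb c hc d hd hmax hsum x hx h1 h2
  have hws : ∀ n : ℕ, ∀ v ∈ (List.range n).map w, 1/3 < v ∧ v < 1 := by
    intro n v hv
    obtain ⟨i, _, rfl⟩ := List.mem_map.mp hv
    exact hw i
  have hwk : ∀ n : ℕ, ∀ v ∈ (List.range n).map w, 0 ≤ v ∧ v ≤ 1 :=
    fun n v hv => ⟨by linarith [(hws n v hv).1], le_of_lt (hws n v hv).2⟩
  set T : Set ℝ :=
    Set.Icc (max (max (a - d) (d - a)) (max (b - c) (c - b))) (min (a + d) (c + b)) with hT
  set K : ℕ → Set ℝ := fun n => cantorApprox ((List.range n).map w) 0 1 ∩ T with hK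
  have hKne : ∀ n, (K n).Nonempty := by
    intro n
    obtain ⟨y, hy, hy1, hy2⟩ := qp_cantor _ (hws n) 1 zero_le_one
      a (Set.mem_iInter.mp ha n) b (Set.mem_iInter.mp hb n) c (Set.mem_iInter.mp hc n)
      d (Set.mem_iInter.mp hd n) hmax x (Set.mem_iInter.mp hx n) h1 h2
    refine ⟨y, hy, ?_⟩
    obtain ⟨p1, p2, p3⟩ := hy1
    obtain ⟨q1, q2, q3⟩ := hy2
    rw [hT, Set.mem_Icc]
    constructor
    · exact max_le (max_le (by linarith) (by linarith)) (max_le (by linarith) (by linarith))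
    · exact le_min (by linarith) (by linarith)
  have hKmono : ∀ n, K (n + 1) ⊆ K n := by
    intro n
    apply Set.inter_subset_inter_left
    have heq : (List.range (n + 1)).map w = (List.range n).map w ++ [w n] := by
      rw [List.range_succ, List.map_append]
      rfl
    rw [heq]
    exact cantorApprox_append _ _ (by linarith [(hw n).1]) (le_of_lt (hw n).2) (hwk n) 0 1
      zero_le_one
  have hKclosed : ∀ n, IsClosed (K n) :=
    fun n => (cantorApprox_isClosed _ _ _).inter isClosed_Icc
  have hKcompact : IsCompact (K 0) := by
    apply (isCompact_Icc : IsCompact (Set.Icc (0:ℝ) 1)).of_isClosed_subset (hKclosed 0)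
    intro s hs
    exact (cantorApprox_subset_Icc _ (hwk 0) 0 1 zero_le_one) hs.1
  obtain ⟨y, hy⟩ := IsCompact.nonempty_iInter_of_sequence_nonempty_isCompact_isClosed
    K hKmono hKne hKcompact hKclosed
  have hyS : y ∈ ⋂ n, cantorApprox ((List.range n).map w) 0 1 :=
    Set.mem_iInter.mpr fun n => (Set.mem_iInter.mp hy n).1
  have hyT : y ∈ T := (Set.mem_iInter.mp hy 0).2
  rw [hT, Set.mem_Icc] at hyT
  obtain ⟨hyL, hyU⟩ := hyT
  refine ⟨y, hyS, ⟨?_, ?_, ?_⟩, ⟨?_, ?_, ?_⟩⟩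
  · have := le_trans (le_trans (le_max_left (a-d) (d-a)) (le_max_left _ _)) hyL
    linarith
  · have := le_trans (le_trans (le_max_right (a-d) (d-a)) (le_max_left _ _)) hyL
    linarith
  · have := le_trans hyU (min_le_left _ _)
    linarith
  · have := le_trans (le_trans (le_max_right (b-c) (c-b)) (le_max_right _ _)) hyL
    linarith
  · have := le_trans (le_trans (le_max_left (b-c) (c-b)) (le_max_right _ _)) hyL
    linarith
  · have := le_trans hyU (min_le_right _ _)
    linarith
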